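/- (Uniqueness of the LASSO solution under strict dual feasibility; Proposition 1, part 2.) Let S ⊆ {1,…,N}, let γ* ∈ ℝ^N satisfy γ*_j = 0 for every j ∉ S, let ε ∈ ℝ^N, and set y := Ũ(γ* + ε) ∈ ℝ^m. Assume G := Ũ_SᵀŨ_S is invertible, λ > 0, and that for every v ∈ ℝ^S with ‖v‖_∞ ≤ 1 and every j ∉ S, |λ·(Ũ_jᵀ Ũ_S G⁻¹ v) + Ũ_jᵀ (I_m − Π_S) Ũ ε| < λ. Then f_{y,λ} has exactly one global minimizer on ℝ^N. -/

import Mathlib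

/-!
Primal–dual witness argument. Minimise the objective over the columns in `S` only (a minimiser
exists by coercivity) and extend the minimiser `β` by zero. Its optimality conditions say that the
correlations `c := Ũᵀ (y - Ũ_S β)` satisfy `c_S = λ s` with `‖s‖_∞ ≤ 1` and `s_j β_j = |β_j|`.
As `I - Π_S` annihilates the range of `Ũ_S` and `y ∈ Ũ ε + range Ũ_S`, the residual is
`(I - Π_S) Ũ ε + λ Ũ_S G⁻¹ s`, so the hypothesis says exactly that `|c_j| < λ` for `j ∉ S`.
Expanding around `β`, `f(γ) = f(β) + ½ ‖Ũ (γ - β)‖² + ∑_j (λ |γ_j| - c_j γ_j)` with all terms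
nonnegative; for a second minimiser both vanish, which puts its support in `S` and then makes it
equal to `β` because `Ũ_S` is injective.
-/

open Matrix Filter Topology

noncomputable def lassoObjective {κ ι : Type*} [Fintype κ] [Fintype ι] (A : Matrix κ ι ℝ)
    (y : κ → ℝ) (lam : ℝ) (β : ι → ℝ) : ℝ :=
  (1/2) * ∑ i, (y i - (A *ᵥ β) i)^2 + lam * ∑ j, |β j|

theorem mul_le_mul_abs_of_abs_le {x b lam : ℝ} (hb : |b| ≤ lam) : x * b ≤ lam * |x| :=
  calc x * b ≤ |x| * |b| := by rw [← abs_mul]; exact le_abs_self _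
    _ ≤ lam * |x| := by rw [mul_comm]; exact mul_le_mul_of_nonneg_right hb (abs_nonneg x)

theorem eq_zero_of_mul_eq_mul_abs {x b lam : ℝ} (h : x * b = lam * |x|) (hb : |b| < lam) :
    x = 0 := by
  by_contra hx
  have : |x| * lam ≤ |x| * |b| := by rw [← abs_mul, mul_comm, ← h]; exact le_abs_self _
  exact (le_of_mul_le_mul_left this (abs_pos.2 hx)).not_gt hb

theorem le_of_forall_mem_Ioo_le_add_mul {u v K : ℝ}
    (h : ∀ s ∈ Set.Ioo (0:ℝ) 1, u ≤ v + s * K) : u ≤ v := by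
  have hlim : Tendsto (fun s => v + s * K) (𝓝[>] 0) (𝓝 v) := by
    apply tendsto_nhdsWithin_of_tendsto_nhds
    simpa using ((by fun_prop : Continuous fun s : ℝ => v + s * K).tendsto 0)
  exact ge_of_tendsto hlim (eventually_of_mem (Ioo_mem_nhdsGT one_pos) h)

-- Moving from `x` in the directions `±1` bounds `|b|`; shrinking `x` towards `0` forces
-- `x b = lam |x|`.
theorem abs_le_and_mul_eq_of_forall_mul_le {a b x lam : ℝ} (hlam : 0 ≤ lam)
    (h : ∀ t, t * b ≤ t^2 * a + lam * (|x + t| - |x|)) : |b| ≤ lam ∧ x * b = lam * |x| := by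
  have hb : |b| ≤ lam := by
    have hdir : ∀ d, |d| = 1 → d * b ≤ lam := fun d hd =>
      le_of_forall_mem_Ioo_le_add_mul (K := a) fun s ⟨hs0, _⟩ => by
        have hstep : |x + s * d| - |x| ≤ s := by
          linarith [abs_add_le x (s * d), show |s * d| = s by simp [abs_mul, hd, hs0.le]]
        have hsq : (s * d)^2 = s^2 := by rw [mul_pow, ← sq_abs d, hd, one_pow, mul_one]
        have hopt := h (s * d)
        rw [hsq] at hopt
        refine le_of_mul_le_mul_left ?_ hs0
        nlinarith [mul_le_mul_of_nonneg_left hstep hlam]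
    rw [abs_le']
    exact ⟨by simpa using hdir 1 (by simp), by simpa using hdir (-1) (by simp)⟩
  refine ⟨hb, le_antisymm (mul_le_mul_abs_of_abs_le hb) ?_⟩
  refine sub_nonpos.1 (le_of_forall_mem_Ioo_le_add_mul (K := x^2 * a) fun s ⟨hs0, hs1⟩ => ?_)
  have hshrink : |x + -s * x| = (1 - s) * |x| := by
    rw [show x + -s * x = (1 - s) * x by ring, abs_mul, abs_of_pos (by linarith)]
  have hopt := h (-s * x)
  rw [hshrink] at hopt
  refine le_of_mul_le_mul_left ?_ hs0
  nlinarith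

section Lasso

variable {κ ι : Type*} [Fintype κ] [Fintype ι]

theorem continuous_lassoObjective (A : Matrix κ ι ℝ) (y : κ → ℝ) (lam : ℝ) :
    Continuous (lassoObjective A y lam) := by
  unfold lassoObjective
  fun_prop

theorem exists_forall_lassoObjective_le (A : Matrix κ ι ℝ) (y : κ → ℝ) {lam : ℝ}
    (hlam : 0 < lam) : ∃ β, ∀ β', lassoObjective A y lam β ≤ lassoObjective A y lam β' := by
  refine (continuous_lassoObjective A y lam).exists_forall_le ?_
  refine tendsto_atTop_mono (fun β => ?_) (tendsto_norm_cocompact_atTop.const_mul_atTop hlam)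
  have hnorm : ‖β‖ ≤ ∑ j, |β j| := (pi_norm_le_iff_of_nonneg (by positivity)).2 fun j =>
    Finset.single_le_sum (f := fun j => |β j|) (fun j _ => abs_nonneg _) (Finset.mem_univ j)
  have hsq : 0 ≤ ∑ i, (y i - (A *ᵥ β) i)^2 := by positivity
  unfold lassoObjective
  nlinarith

theorem sum_sq_sub_mulVec_add (A : Matrix κ ι ℝ) (y : κ → ℝ) (β δ : ι → ℝ) :
    ∑ i, (y i - (A *ᵥ (β + δ)) i)^2 = ∑ i, (y i - (A *ᵥ β) i)^2
      - 2 * ((y - A *ᵥ β) ᵥ* A) ⬝ᵥ δ + ∑ i, ((A *ᵥ δ) i)^2 := by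
  rw [← dotProduct_mulVec, mulVec_add]
  simp only [dotProduct, Pi.sub_apply, Pi.add_apply, Finset.mul_sum, ← Finset.sum_sub_distrib,
    ← Finset.sum_add_distrib]
  exact Finset.sum_congr rfl fun i _ => by ring

theorem sum_abs_add_single [DecidableEq ι] (β : ι → ℝ) (j : ι) (t : ℝ) :
    ∑ k, |(β + Pi.single j t : ι → ℝ) k| = ∑ k, |β k| + (|β j + t| - |β j|) := by
  rw [← sub_eq_iff_eq_add', ← Finset.sum_sub_distrib,
    Finset.sum_eq_single j (fun k _ hk => by simp [hk]) (by simp)]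
  simp

theorem abs_le_and_mul_eq_of_forall_lassoObjective_le {A : Matrix κ ι ℝ} {y : κ → ℝ} {lam : ℝ}
    (hlam : 0 ≤ lam) {β : ι → ℝ} (hβ : ∀ β', lassoObjective A y lam β ≤ lassoObjective A y lam β')
    (j : ι) :
    |((y - A *ᵥ β) ᵥ* A) j| ≤ lam ∧ β j * ((y - A *ᵥ β) ᵥ* A) j = lam * |β j| := by
  classical
  refine abs_le_and_mul_eq_of_forall_mul_le (a := (1/2) * ∑ i, A i j ^ 2) hlam fun t => ?_
  have hcol : ∀ i, (A *ᵥ Pi.single j t) i = A i j * t := fun i => dotProduct_single _ _ _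
  have := hβ (β + Pi.single j t)
  simp only [lassoObjective, sum_sq_sub_mulVec_add, sum_abs_add_single, dotProduct_single,
    hcol, mul_pow, ← Finset.sum_mul] at this
  linarith

theorem lassoObjective_eq_add_of_mul_eq {A : Matrix κ ι ℝ} {y : κ → ℝ} {lam : ℝ} {β : ι → ℝ}
    (hsign : ∀ j, β j * ((y - A *ᵥ β) ᵥ* A) j = lam * |β j|) (γ : ι → ℝ) :
    lassoObjective A y lam γ = lassoObjective A y lam β + (1/2) * ∑ i, ((A *ᵥ (γ - β)) i)^2
      + ∑ j, (lam * |γ j| - γ j * ((y - A *ᵥ β) ᵥ* A) j) := by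
  have hsq := sum_sq_sub_mulVec_add A y β (γ - β)
  rw [add_sub_cancel] at hsq
  have hlin : ((y - A *ᵥ β) ᵥ* A) ⬝ᵥ (γ - β)
      = ∑ j, γ j * ((y - A *ᵥ β) ᵥ* A) j - lam * ∑ j, |β j| := by
    simp only [dotProduct, Pi.sub_apply, Finset.mul_sum, ← hsign, ← Finset.sum_sub_distrib]
    exact Finset.sum_congr rfl fun j _ => by ring
  simp only [lassoObjective, hsq, hlin, Finset.sum_sub_distrib, ← Finset.mul_sum]
  ring

theorem existsUnique_forall_lassoObjective_le_of_dual_certificate {A : Matrix κ ι ℝ} {y : κ → ℝ}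
    {lam : ℝ} {β : ι → ℝ} (S : Finset ι)
    (hle : ∀ j, |((y - A *ᵥ β) ᵥ* A) j| ≤ lam)
    (hlt : ∀ j ∉ S, |((y - A *ᵥ β) ᵥ* A) j| < lam)
    (hsign : ∀ j, β j * ((y - A *ᵥ β) ᵥ* A) j = lam * |β j|)
    (hinj : ∀ δ : ι → ℝ, (∀ j ∉ S, δ j = 0) → A *ᵥ δ = 0 → δ = 0) :
    ∃! β₀, ∀ γ, lassoObjective A y lam β₀ ≤ lassoObjective A y lam γ := by
  set c := (y - A *ᵥ β) ᵥ* A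
  have hfit : ∀ γ : ι → ℝ, 0 ≤ ∑ i, ((A *ᵥ (γ - β)) i)^2 := fun γ => by positivity
  have hgap : ∀ γ : ι → ℝ, ∀ j ∈ Finset.univ, 0 ≤ lam * |γ j| - γ j * c j :=
    fun γ j _ => sub_nonneg.2 (mul_le_mul_abs_of_abs_le (hle j))
  have hexp := lassoObjective_eq_add_of_mul_eq hsign
  refine ⟨β, fun γ => ?_, fun γ hγ => ?_⟩
  · linarith [hexp γ, hfit γ, Finset.sum_nonneg (hgap γ)]
  have hzero : (1/2) * ∑ i, ((A *ᵥ (γ - β)) i)^2 + ∑ j, (lam * |γ j| - γ j * c j) = 0 := by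
    linarith [hexp γ, hγ β, hfit γ, Finset.sum_nonneg (hgap γ)]
  rw [add_eq_zero_iff_of_nonneg (by linarith [hfit γ]) (Finset.sum_nonneg (hgap γ)),
    Finset.sum_eq_zero_iff_of_nonneg (hgap γ)] at hzero
  obtain ⟨hfit0, hgap0⟩ := hzero
  have hsupp : ∀ x : ι → ℝ, (∀ j, x j * c j = lam * |x j|) → ∀ j ∉ S, x j = 0 :=
    fun x hx j hj => eq_zero_of_mul_eq_mul_abs (hx j) (hlt j hj)
  have hγS := hsupp γ fun j => (sub_eq_zero.1 (hgap0 j (Finset.mem_univ j))).symm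
  have hδ : A *ᵥ (γ - β) = 0 := funext fun i => pow_eq_zero_iff two_ne_zero |>.1 <|
    (Finset.sum_eq_zero_iff_of_nonneg fun i _ => sq_nonneg _).1 (by linarith) i (Finset.mem_univ i)
  exact sub_eq_zero.1 (hinj _ (fun j hj => by simp [hγS j hj, hsupp β hsign j hj]) hδ)

end Lasso

section Gram

variable {κ ι : Type*} [Fintype κ] [Fintype ι] [DecidableEq ι]

theorem eq_zero_of_mulVec_eq_zero_of_isUnit_det {A : Matrix κ ι ℝ} (hA : IsUnit (Aᵀ * A).det)
    {v : ι → ℝ} (hv : A *ᵥ v = 0) : v = 0 := by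
  rw [← one_mulVec v, ← nonsing_inv_mul _ hA, ← mulVec_mulVec, ← mulVec_mulVec, hv,
    mulVec_zero, mulVec_zero]

theorem one_sub_proj_mul_self [DecidableEq κ] {A : Matrix κ ι ℝ} (hA : IsUnit (Aᵀ * A).det) :
    (1 - A * (Aᵀ * A)⁻¹ * Aᵀ) * A = 0 := by
  rw [Matrix.sub_mul, Matrix.one_mul, Matrix.mul_assoc, Matrix.mul_assoc, nonsing_inv_mul _ hA,
    Matrix.mul_one, sub_self]

theorem sub_mulVec_eq_of_eq_mulVec_add [DecidableEq κ] {A : Matrix κ ι ℝ}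
    (hA : IsUnit (Aᵀ * A).det)
    {y e : κ → ℝ} {w : ι → ℝ} (hy : y = A *ᵥ w + e) (β : ι → ℝ) :
    y - A *ᵥ β = (1 - A * (Aᵀ * A)⁻¹ * Aᵀ) *ᵥ e
      + A *ᵥ ((Aᵀ * A)⁻¹ *ᵥ ((y - A *ᵥ β) ᵥ* A)) := by
  set P := A * (Aᵀ * A)⁻¹ * Aᵀ
  have hperp : (1 - P) *ᵥ (y - A *ᵥ β) = (1 - P) *ᵥ e := by
    rw [hy, add_sub_right_comm, ← mulVec_sub, mulVec_add, mulVec_mulVec,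
      one_sub_proj_mul_self hA, zero_mulVec, zero_add]
  have hproj : P *ᵥ (y - A *ᵥ β) = A *ᵥ ((Aᵀ * A)⁻¹ *ᵥ ((y - A *ᵥ β) ᵥ* A)) := by
    rw [← mulVec_transpose, mulVec_mulVec, mulVec_mulVec]
  rw [← hperp, ← hproj, ← add_mulVec, sub_add_cancel, one_mulVec]

end Gram

theorem mulVec_eq_submatrix_mulVec_of_support {κ ι : Type*} [Fintype ι] (A : Matrix κ ι ℝ)
    (S : Finset ι) {g : ι → ℝ} (hg : ∀ j ∉ S, g j = 0) :
    A *ᵥ g = A.submatrix id ((↑) : S → ι) *ᵥ fun j => g j := by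
  funext i
  simp only [mulVec, dotProduct, submatrix_apply, id]
  rw [Finset.sum_coe_sort S (fun j => A i j * g j)]
  exact (Finset.sum_subset (Finset.subset_univ S) fun j _ hj => by simp [hg j hj]).symm

theorem existsUnique_forall_lassoObjective_le_of_restrict {κ ι : Type*} [Fintype κ] [Fintype ι]
    {A : Matrix κ ι ℝ} {y : κ → ℝ} {lam : ℝ} (hlam : 0 ≤ lam) (S : Finset ι)
    (hinj : ∀ v, A.submatrix id ((↑) : S → ι) *ᵥ v = 0 → v = 0) {β : S → ℝ}
    (hβ : ∀ β', lassoObjective (A.submatrix id ((↑) : S → ι)) y lam β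
      ≤ lassoObjective (A.submatrix id ((↑) : S → ι)) y lam β')
    (hlt : ∀ j ∉ S, |((y - A.submatrix id ((↑) : S → ι) *ᵥ β) ᵥ* A) j| < lam) :
    ∃! b, ∀ γ, lassoObjective A y lam b ≤ lassoObjective A y lam γ := by
  classical
  set AS := A.submatrix id ((↑) : S → ι)
  have hkkt := abs_le_and_mul_eq_of_forall_lassoObjective_le hlam hβ
  set γh : ι → ℝ := fun j => if h : j ∈ S then β ⟨j, h⟩ else 0
  have hγhS : ∀ j ∉ S, γh j = 0 := fun j hj => dif_neg hj
  have hres : y - A *ᵥ γh = y - AS *ᵥ β := by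
    rw [mulVec_eq_submatrix_mulVec_of_support A S hγhS]
    congr 2
    funext j
    exact dif_pos j.2
  have hcorrS : ∀ j : S, ((y - AS *ᵥ β) ᵥ* A) j = ((y - AS *ᵥ β) ᵥ* AS) j := fun _ => rfl
  have hcert := existsUnique_forall_lassoObjective_le_of_dual_certificate (A := A) (lam := lam) S
    (y := y) (β := γh)
  rw [hres] at hcert
  refine hcert (fun j => ?_) hlt (fun j => ?_) fun δ hδS hδ => ?_
  · by_cases hj : j ∈ S
    · rw [hcorrS ⟨j, hj⟩]; exact (hkkt _).1
    · exact (hlt j hj).le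
  · by_cases hj : j ∈ S
    · rw [hcorrS ⟨j, hj⟩]; simpa [γh, hj] using (hkkt _).2
    · simp [hγhS j hj]
  · have := hinj _ ((mulVec_eq_submatrix_mulVec_of_support A S hδS).symm.trans hδ)
    funext j
    by_cases hj : j ∈ S
    · exact congrFun this ⟨j, hj⟩
    · exact hδS j hj

/-- (Uniqueness of the LASSO solution under strict dual feasibility; Proposition 1, part 2.) -/
theorem stmt_1 (m N : ℕ) (U : Matrix (Fin m) (Fin N) ℝ)
    (S : Finset (Fin N))
    (γs : Fin N → ℝ) (hγs : ∀ j ∉ S, γs j = 0)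
    (ε : Fin N → ℝ)
    (lam : ℝ) (hlam : 0 < lam)
    (US : Matrix (Fin m) {j // j ∈ S} ℝ) (hUS : US = Matrix.of fun i j => U i j.1)
    (G : Matrix {j // j ∈ S} {j // j ∈ S} ℝ) (hG : G = USᵀ * US)
    (hGinv : IsUnit G.det)
    (PiS : Matrix (Fin m) (Fin m) ℝ) (hPiS : PiS = US * G⁻¹ * USᵀ)
    (y : Fin m → ℝ) (hy : y = U *ᵥ (γs + ε))
    (hdual : ∀ v : {j // j ∈ S} → ℝ, (∀ i, |v i| ≤ 1) →
      ∀ j ∉ S, |lam * ((fun i => U i j) ⬝ᵥ (US *ᵥ (G⁻¹ *ᵥ v))) +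
        (fun i => U i j) ⬝ᵥ ((1 - PiS) *ᵥ (U *ᵥ ε))| < lam) :
    ∃! γhat : Fin N → ℝ,
      ∀ γ : Fin N → ℝ,
        (1/2) * ∑ i, (y i - (U *ᵥ γhat) i)^2 + lam * ∑ j, |γhat j| ≤
        (1/2) * ∑ i, (y i - (U *ᵥ γ) i)^2 + lam * ∑ j, |γ j| := by
  have hUS' : US = U.submatrix id ((↑) : S → Fin N) := hUS
  subst hUS' hG hPiS
  set US := U.submatrix id ((↑) : S → Fin N)
  obtain ⟨β, hβ⟩ := exists_forall_lassoObjective_le US y hlam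
  have hdecomp := sub_mulVec_eq_of_eq_mulVec_add hGinv (y := y) (w := fun j => γs j)
    (e := U *ᵥ ε) (by rw [hy, mulVec_add, mulVec_eq_submatrix_mulVec_of_support U S hγs]) β
  set r := y - US *ᵥ β
  set v : S → ℝ := fun j => (r ᵥ* US) j / lam
  have hrv : r ᵥ* US = lam • v := funext fun j => (mul_div_cancel₀ _ hlam.ne').symm
  have hv : ∀ j, |v j| ≤ 1 := fun j => by
    rw [abs_div, abs_of_pos hlam, div_le_one hlam]
    exact (abs_le_and_mul_eq_of_forall_lassoObjective_le hlam.le hβ j).1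
  refine existsUnique_forall_lassoObjective_le_of_restrict hlam.le S
    (fun _ => eq_zero_of_mulVec_eq_zero_of_isUnit_det hGinv) hβ fun j hj => ?_
  show |(r ᵥ* U) j| < lam
  convert hdual v hv j hj using 2
  rw [vecMul, dotProduct_comm, hdecomp, hrv, dotProduct_add, mulVec_smul, mulVec_smul,
    dotProduct_smul, smul_eq_mul]
  ring
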